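/- arXiv:1607.02209 — 2 statements merged into one kernel-verified Lean document; each statement's English description precedes it below -/
import Mathlib

section
/- (Theorem: semi-invariants of filtered D_r-Dynkin quivers.) Let n ≥ 1 and r ≥ 4, and let Q be an arbitrary orientation of the D_r-Dynkin graph: vertices 1,…,r and arrows a_1,…,a_{r−1}, where for 1 ≤ α ≤ r−2 the endpoint set of a_α is {α, α+1}, and the endpoint set of a_{r−1} is {r−2, r}. Let U_n^r act on 𝔟_n^{⊕(r−1)} by (u_1,…,u_r)·(A_1,…,A_{r−1}) = (u_{h(a_α)} A_α u_{t(a_α)}^{−1})_{α}. Then a polynomial function f on 𝔟_n^{⊕(r−1)} is invariant under this action if and only if there is a polynomial g in (r−1)·n variables such that f(A_1,…,A_{r−1}) = g(((A_α)_{ii})_{1≤α≤r−1, 1≤i≤n}) for all tuples of upper triangular matrices; that is, ℂ[F•Rep(Q,β)]^{𝕌_β} = ℂ[𝔱_n^{⊕(r−1)}] for β = (n,…,n). -/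
/-- `M` is an upper triangular complex matrix (an element of `𝔟ₙ`). -/
def IsUT {n : ℕ} (M : Matrix (Fin n) (Fin n) ℂ) : Prop :=
  ∀ i j : Fin n, j < i → M i j = 0

/-- `M` is a unipotent upper triangular complex matrix (an element of `Uₙ`). -/
def IsUnipUT {n : ℕ} (M : Matrix (Fin n) (Fin n) ℂ) : Prop :=
  IsUT M ∧ ∀ i : Fin n, M i i = 1

/-!
A unipotent gauge does not change the diagonal entries of an upper triangular matrix, so
polynomials in the diagonal entries are invariant. Conversely, the `D_r` graph is a tree whose
arrows can be listed so that each one reaches a new vertex; when the diagonals of all `A_α` are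
invertible, one can therefore choose unipotent matrices vertex by vertex that move every `A_α`
to its diagonal part. An invariant `f` thus agrees with `f` of the diagonal parts on a Zariski
dense subset of `𝔟ₙ^{⊕(r-1)}`, hence everywhere.
-/

open Matrix MvPolynomial

section

variable {n : ℕ}

namespace IsUT

variable {A B : Matrix (Fin n) (Fin n) ℂ}

lemma isUpperTriangular (hA : IsUT A) : A.IsUpperTriangular :=
  fun i j h => hA i j h

lemma mul (hA : IsUT A) (hB : IsUT B) : IsUT (A * B) :=
  fun _ _ h => hA.isUpperTriangular.mul hB.isUpperTriangular h

lemma mul_apply_self (hA : IsUT A) (hB : IsUT B) (i : Fin n) :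
    (A * B) i i = A i i * B i i := by
  rw [mul_apply]
  refine Finset.sum_eq_single i (fun k _ hk => ?_) (by simp)
  rcases hk.lt_or_gt with h | h
  · rw [hA i k h, zero_mul]
  · rw [hB k i h, mul_zero]

lemma inv (hA : IsUT A) : IsUT A⁻¹ := by
  by_cases h : IsUnit A.det
  · have := A.invertibleOfIsUnitDet h
    exact fun _ _ hij => blockTriangular_inv_of_blockTriangular hA.isUpperTriangular hij
  · simp [nonsing_inv_apply_not_isUnit A h, IsUT]

lemma isUnit_det (hA : IsUT A) (hA0 : ∀ i, A i i ≠ 0) : IsUnit A.det := by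
  rw [det_of_isUpperTriangular hA.isUpperTriangular, isUnit_iff_ne_zero]
  exact Finset.prod_ne_zero_iff.mpr fun i _ => hA0 i

lemma inv_apply_self (hA : IsUT A) (hA0 : ∀ i, A i i ≠ 0) (i : Fin n) :
    A⁻¹ i i = (A i i)⁻¹ := by
  have h := congrFun (congrFun (nonsing_inv_mul A (hA.isUnit_det hA0)) i) i
  rw [hA.inv.mul_apply_self hA, one_apply_eq] at h
  exact eq_inv_of_mul_eq_one_left h

end IsUT

lemma isUT_diagonal (d : Fin n → ℂ) : IsUT (diagonal d) :=
  fun _ _ h => diagonal_apply_ne _ h.ne'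

lemma isUnipUT_one : IsUnipUT (1 : Matrix (Fin n) (Fin n) ℂ) :=
  ⟨isUT_diagonal _, fun i => one_apply_eq i⟩

namespace IsUnipUT

variable {u v A : Matrix (Fin n) (Fin n) ℂ}

lemma isUnit_det (hu : IsUnipUT u) : IsUnit u.det :=
  hu.1.isUnit_det fun i => by simp [hu.2 i]

lemma inv (hu : IsUnipUT u) : IsUnipUT u⁻¹ :=
  ⟨hu.1.inv, fun i => by rw [hu.1.inv_apply_self (fun i => by simp [hu.2 i]), hu.2, inv_one]⟩

lemma mul_mul_inv_apply_self (hu : IsUnipUT u) (hv : IsUnipUT v) (hA : IsUT A) (i : Fin n) :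
    (u * A * v⁻¹) i i = A i i := by
  rw [(hu.1.mul hA).mul_apply_self hv.inv.1, hu.1.mul_apply_self hA, hu.2, hv.inv.2,
    one_mul, mul_one]

end IsUnipUT

namespace IsUT

variable {A : Matrix (Fin n) (Fin n) ℂ}

lemma exists_isUnipUT_left_diagonalizing (hA : IsUT A) (hA0 : ∀ i, A i i ≠ 0)
    {v : Matrix (Fin n) (Fin n) ℂ} (hv : IsUnipUT v) :
    ∃ u, IsUnipUT u ∧ u * A * v⁻¹ = diagonal A.diag := by
  refine ⟨diagonal A.diag * v * A⁻¹, ⟨((isUT_diagonal _).mul hv.1).mul hA.inv, fun i => ?_⟩, ?_⟩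
  · rw [((isUT_diagonal _).mul hv.1).mul_apply_self hA.inv, (isUT_diagonal _).mul_apply_self hv.1,
      hA.inv_apply_self hA0, hv.2, diagonal_apply_eq, diag_apply, mul_one, mul_inv_cancel₀ (hA0 i)]
  · rw [Matrix.mul_assoc _ A⁻¹, nonsing_inv_mul A (hA.isUnit_det hA0), Matrix.mul_one,
      Matrix.mul_assoc, mul_nonsing_inv v hv.isUnit_det, Matrix.mul_one]

lemma exists_isUnipUT_right_diagonalizing (hA : IsUT A) (hA0 : ∀ i, A i i ≠ 0)
    {u : Matrix (Fin n) (Fin n) ℂ} (hu : IsUnipUT u) :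
    ∃ v, IsUnipUT v ∧ u * A * v⁻¹ = diagonal A.diag := by
  have hD0 : ∀ i, diagonal A.diag i i ≠ 0 := by simpa using hA0
  have hD : IsUnit (diagonal A.diag).det := (isUT_diagonal _).isUnit_det hD0
  refine ⟨(diagonal A.diag)⁻¹ * u * A, ⟨((isUT_diagonal _).inv.mul hu.1).mul hA, fun i => ?_⟩, ?_⟩
  · rw [((isUT_diagonal _).inv.mul hu.1).mul_apply_self hA,
      (isUT_diagonal _).inv.mul_apply_self hu.1, (isUT_diagonal _).inv_apply_self hD0, hu.2, diagonal_apply_eq, diag_apply, mul_one,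
      inv_mul_cancel₀ (hA0 i)]
  · rw [Matrix.mul_inv_rev, Matrix.mul_inv_rev, nonsing_inv_nonsing_inv _ hD, Matrix.mul_assoc u A,
      mul_nonsing_inv_cancel_left A _ (hA.isUnit_det hA0),
      mul_nonsing_inv_cancel_left u _ hu.isUnit_det]

end IsUT

section Gauge

variable {ι V : Type*} {tl hd : ι → V} {A : ι → Matrix (Fin n) (Fin n) ℂ}

lemma exists_diagonalizing_gauge_insert [DecidableEq V] {S : Set ι}
    {u : V → Matrix (Fin n) (Fin n) ℂ} (hu : ∀ v, IsUnipUT (u v))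
    (hS : ∀ α ∈ S, u (hd α) * A α * (u (tl α))⁻¹ = diagonal (A α).diag)
    {β : ι} (hβ : IsUT (A β)) (hβ0 : ∀ i, A β i i ≠ 0) {w : V}
    (hwS : ∀ α ∈ S, hd α ≠ w ∧ tl α ≠ w) (hwβ : (hd β = w ∧ tl β ≠ w) ∨ (tl β = w ∧ hd β ≠ w)) :
    ∃ u' : V → Matrix (Fin n) (Fin n) ℂ, (∀ v, IsUnipUT (u' v)) ∧
      ∀ α ∈ insert β S, u' (hd α) * A α * (u' (tl α))⁻¹ = diagonal (A α).diag := by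
  have hupdate : ∀ x, IsUnipUT x → ∀ v, IsUnipUT (Function.update u w x v) := by
    intro x hx v
    by_cases hv : v = w
    · subst hv; simpa using hx
    · simpa [hv] using hu v
  have hS' : ∀ x, ∀ α ∈ S, Function.update u w x (hd α) * A α *
      (Function.update u w x (tl α))⁻¹ = diagonal (A α).diag := fun x α hα => by
    simpa [Function.update_of_ne (hwS α hα).1, Function.update_of_ne (hwS α hα).2] using hS α hα
  rcases hwβ with ⟨rfl, hne⟩ | ⟨rfl, hne⟩
  · obtain ⟨x, hx, hxβ⟩ := hβ.exists_isUnipUT_left_diagonalizing hβ0 (hu (tl β))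
    refine ⟨Function.update u (hd β) x, hupdate x hx, ?_⟩
    rintro α (rfl | hα)
    · simpa [Function.update_of_ne hne] using hxβ
    · exact hS' x α hα
  · obtain ⟨x, hx, hxβ⟩ := hβ.exists_isUnipUT_right_diagonalizing hβ0 (hu (hd β))
    refine ⟨Function.update u (tl β) x, hupdate x hx, ?_⟩
    rintro α (rfl | hα)
    · simpa [Function.update_of_ne hne] using hxβ
    · exact hS' x α hα

theorem exists_diagonalizing_gauge_of_leaf_order {m r : ℕ} {tl hd : Fin m → Fin r}
    (hleaf : ∀ α : Fin m,
      ((hd α : ℕ) = α + 1 ∧ (tl α : ℕ) ≤ α) ∨ ((tl α : ℕ) = α + 1 ∧ (hd α : ℕ) ≤ α))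
    {A : Fin m → Matrix (Fin n) (Fin n) ℂ} (hA : ∀ α, IsUT (A α)) (hA0 : ∀ α i, A α i i ≠ 0) :
    ∃ u : Fin r → Matrix (Fin n) (Fin n) ℂ, (∀ v, IsUnipUT (u v)) ∧
      ∀ α, u (hd α) * A α * (u (tl α))⁻¹ = diagonal (A α).diag := by
  suffices h : ∀ k ≤ m, ∃ u : Fin r → Matrix (Fin n) (Fin n) ℂ, (∀ v, IsUnipUT (u v)) ∧
      ∀ α ∈ {α : Fin m | (α : ℕ) < k}, u (hd α) * A α * (u (tl α))⁻¹ = diagonal (A α).diag by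
    obtain ⟨u, hu, hdiag⟩ := h m le_rfl
    exact ⟨u, hu, fun α => hdiag α α.isLt⟩
  intro k hk
  induction k with
  | zero => exact ⟨1, fun _ => isUnipUT_one, by simp⟩
  | succ k ih =>
    obtain ⟨u, hu, hdiag⟩ := ih (by omega)
    let β : Fin m := ⟨k, by omega⟩
    have hinsert : {α : Fin m | (α : ℕ) < k + 1} = insert β {α : Fin m | (α : ℕ) < k} := by
      ext α
      simp only [Set.mem_ofPred_eq, Set.mem_insert_iff, Fin.ext_iff, β]
      omega
    -- the endpoint `k + 1` of the `k`-th arrow is not an endpoint of any earlier arrow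
    obtain ⟨w, hw, hwβ⟩ : ∃ w : Fin r, (w : ℕ) = k + 1 ∧
        ((hd β = w ∧ tl β ≠ w) ∨ (tl β = w ∧ hd β ≠ w)) := by
      rcases hleaf β with h | h
      · exact ⟨hd β, h.1, Or.inl ⟨rfl, Fin.ne_of_val_ne (by omega)⟩⟩
      · exact ⟨tl β, h.1, Or.inr ⟨rfl, Fin.ne_of_val_ne (by omega)⟩⟩
    rw [hinsert]
    refine exists_diagonalizing_gauge_insert hu hdiag (hA β) (hA0 β)
      (fun α (hα : (α : ℕ) < k) => ?_) hwβ
    have := hleaf α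
    exact ⟨Fin.ne_of_val_ne (by omega), Fin.ne_of_val_ne (by omega)⟩

end Gauge

section PolynomialFunctions

variable {ι : Type*} {f : (ι → Matrix (Fin n) (Fin n) ℂ) → ℂ}

lemma exists_eval_eq_comp {τ : Type*}
    (hf : ∃ P : MvPolynomial (ι × Fin n × Fin n) ℂ,
      ∀ A, f A = eval (fun q => A q.1 q.2.1 q.2.2) P)
    (Φ : (τ → ℂ) → ι → Matrix (Fin n) (Fin n) ℂ) (φ : ι × Fin n × Fin n → MvPolynomial τ ℂ)
    (hΦ : ∀ y q, Φ y q.1 q.2.1 q.2.2 = eval y (φ q)) :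
    ∃ Q : MvPolynomial τ ℂ, ∀ y, f (Φ y) = eval y Q := by
  obtain ⟨P, hP⟩ := hf
  refine ⟨bind₁ φ P, fun y => ?_⟩
  rw [hP, show eval y (bind₁ φ P) = eval (fun q => eval y (φ q)) P from eval₂Hom_bind₁ _ _ _ _]
  simp only [hΦ]

theorem apply_eq_apply_diagonal_of_isUT
    (hf : ∃ P : MvPolynomial (ι × Fin n × Fin n) ℂ,
      ∀ A, f A = eval (fun q => A q.1 q.2.1 q.2.2) P)
    (h : ∀ A, (∀ α, IsUT (A α)) → (∀ α i, A α i i ≠ 0) → f A = f fun α => diagonal (A α).diag)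
    {A : ι → Matrix (Fin n) (Fin n) ℂ} (hA : ∀ α, IsUT (A α)) :
    f A = f fun α => diagonal (A α).diag := by
  let upper (x : ι × Fin n × Fin n → ℂ) (α : ι) : Matrix (Fin n) (Fin n) ℂ :=
    of fun i j => if j < i then 0 else x (α, i, j)
  have hupper : ∀ x α, IsUT (upper x α) := fun x α i j hij => by simp [upper, hij]
  obtain ⟨Q₁, hQ₁⟩ := exists_eval_eq_comp hf upper (fun q => if q.2.2 < q.2.1 then 0 else X q)
    fun x q => by split_ifs <;> simp [upper, *]
  obtain ⟨Q₂, hQ₂⟩ := exists_eval_eq_comp hf (fun x α => diagonal fun i => x (α, i, i))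
    (fun q => if q.2.1 = q.2.2 then X q else 0)
    fun x ⟨α, i, j⟩ => by by_cases hij : i = j <;> simp [hij]
  -- the points with no vanishing coordinate are Zariski dense
  have hQ : Q₁ = Q₂ := by
    refine funext_set (fun _ => {0}ᶜ) (fun _ => (Set.finite_singleton 0).infinite_compl)
      fun x hx => ?_
    rw [← hQ₁, ← hQ₂, h _ (hupper x) fun α i => by simpa [upper] using hx (α, i, i) trivial]
    congr! 3 with α
    ext i
    simp [upper]
  have hAupper : upper (fun q => A q.1 q.2.1 q.2.2) = A := by
    funext α
    ext i j
    by_cases hij : j < i <;> simp [upper, hij, hA α i j]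
  calc f A = eval (fun q => A q.1 q.2.1 q.2.2) Q₁ := by rw [← hQ₁, hAupper]
    _ = f fun α => diagonal (A α).diag := by rw [hQ, ← hQ₂]; rfl

end PolynomialFunctions

end

theorem semiInvariants_filtered_Dr_Dynkin_quiver_general
    (n r : ℕ)
    (tl hd : Fin (r - 1) → Fin r)
    (hor : ∀ α : Fin (r - 1),
      ((α : ℕ) < r - 2 →
        (((tl α : ℕ) = (α : ℕ) ∧ (hd α : ℕ) = (α : ℕ) + 1) ∨
         ((tl α : ℕ) = (α : ℕ) + 1 ∧ (hd α : ℕ) = (α : ℕ)))) ∧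
      ((α : ℕ) = r - 2 →
        (((tl α : ℕ) = r - 3 ∧ (hd α : ℕ) = r - 1) ∨
         ((tl α : ℕ) = r - 1 ∧ (hd α : ℕ) = r - 3))))
    (f : (Fin (r - 1) → Matrix (Fin n) (Fin n) ℂ) → ℂ)
    (hf : ∃ P : MvPolynomial (Fin (r - 1) × Fin n × Fin n) ℂ,
      ∀ A, f A = MvPolynomial.eval (fun q => A q.1 q.2.1 q.2.2) P) :
    (∀ u : Fin r → Matrix (Fin n) (Fin n) ℂ, (∀ v, IsUnipUT (u v)) →
        ∀ A : Fin (r - 1) → Matrix (Fin n) (Fin n) ℂ, (∀ α, IsUT (A α)) →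
          f (fun α => u (hd α) * A α * (u (tl α))⁻¹) = f A) ↔
      ∃ g : MvPolynomial (Fin (r - 1) × Fin n) ℂ,
        ∀ A : Fin (r - 1) → Matrix (Fin n) (Fin n) ℂ, (∀ α, IsUT (A α)) →
          f A = MvPolynomial.eval (fun q => A q.1 q.2 q.2) g := by
  have hleaf : ∀ α : Fin (r - 1),
      ((hd α : ℕ) = α + 1 ∧ (tl α : ℕ) ≤ α) ∨ ((tl α : ℕ) = α + 1 ∧ (hd α : ℕ) ≤ α) := by
    intro α
    have := α.isLt
    by_cases hα : (α : ℕ) < r - 2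
    · have := (hor α).1 hα; omega
    · have := (hor α).2 (by omega); omega
  constructor
  · intro hinv
    obtain ⟨g, hg⟩ := exists_eval_eq_comp hf (fun y α => diagonal fun i => y (α, i))
      (fun q => if q.2.1 = q.2.2 then X (q.1, q.2.1) else 0)
      fun y ⟨α, i, j⟩ => by by_cases hij : i = j <;> simp [hij]
    refine ⟨g, fun A hA => (apply_eq_apply_diagonal_of_isUT hf (fun A hA hA0 => ?_) hA).trans
      (hg fun q => A q.1 q.2 q.2)⟩
    obtain ⟨u, hu, hdiag⟩ := exists_diagonalizing_gauge_of_leaf_order hleaf hA hA0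
    rw [← hinv u hu A hA]
    exact congrArg f (funext hdiag)
  · rintro ⟨g, hg⟩ u hu A hA
    rw [hg _ fun α => ((hu _).1.mul (hA α)).mul (hu _).inv.1, hg A hA]
    simp only [(hu _).mul_mul_inv_apply_self (hu _) (hA _)]

/-- Semi-invariants of filtered `D_r`-Dynkin quivers:
for any orientation of the `D_r`-Dynkin graph (vertices `Fin r` in 0-indexed form,
arrows `Fin (r-1)`; for `α < r-2` the `α`-th arrow joins `α` and `α+1`, and the last
arrow (index `r-2`) joins `r-3` and `r-1`), a polynomial function on `𝔟ₙ^{⊕(r-1)}` is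
invariant under the change-of-basis action of `Uₙ^r` iff it is a polynomial in the
diagonal entries; i.e. `ℂ[F•Rep(Q,β)]^{𝕌_β} = ℂ[𝔱ₙ^{⊕(r-1)}]`. -/
theorem semiInvariants_filtered_Dr_Dynkin_quiver
    (n r : ℕ) (hn : 1 ≤ n) (hr : 4 ≤ r)
    (tl hd : Fin (r - 1) → Fin r)
    (hor : ∀ α : Fin (r - 1),
      ((α : ℕ) < r - 2 →
        (((tl α : ℕ) = (α : ℕ) ∧ (hd α : ℕ) = (α : ℕ) + 1) ∨
         ((tl α : ℕ) = (α : ℕ) + 1 ∧ (hd α : ℕ) = (α : ℕ)))) ∧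
      ((α : ℕ) = r - 2 →
        (((tl α : ℕ) = r - 3 ∧ (hd α : ℕ) = r - 1) ∨
         ((tl α : ℕ) = r - 1 ∧ (hd α : ℕ) = r - 3))))
    (f : (Fin (r - 1) → Matrix (Fin n) (Fin n) ℂ) → ℂ)
    (hf : ∃ P : MvPolynomial (Fin (r - 1) × Fin n × Fin n) ℂ,
      ∀ A, f A = MvPolynomial.eval (fun q => A q.1 q.2.1 q.2.2) P) :
    (∀ u : Fin r → Matrix (Fin n) (Fin n) ℂ, (∀ v, IsUnipUT (u v)) →
        ∀ A : Fin (r - 1) → Matrix (Fin n) (Fin n) ℂ, (∀ α, IsUT (A α)) →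
          f (fun α => u (hd α) * A α * (u (tl α))⁻¹) = f A) ↔
      ∃ g : MvPolynomial (Fin (r - 1) × Fin n) ℂ,
        ∀ A : Fin (r - 1) → Matrix (Fin n) (Fin n) ℂ, (∀ α, IsUT (A α)) →
          f A = MvPolynomial.eval (fun q => A q.1 q.2 q.2) g :=
  semiInvariants_filtered_Dr_Dynkin_quiver_general n r tl hd hor f hf
end

section
/- (Corollary: semi-invariants of filtered affine Ã_r-Dynkin quivers without framing.) Let n ≥ 1 and r ≥ 1, and let Q be an arbitrary orientation of the affine Ã_r-Dynkin graph: vertices 1,…,r+1 arranged in a cycle, with arrows a_1,…,a_{r+1}, where for 1 ≤ α ≤ r the endpoint set of a_α is {α, α+1} and the endpoint set of a_{r+1} is {r+1, 1}. Let U_n^{r+1} act on 𝔟_n^{⊕(r+1)} by (u_1,…,u_{r+1})·(A_1,…,A_{r+1}) = (u_{h(a_α)} A_α u_{t(a_α)}^{−1})_{α}. Then a polynomial function f on 𝔟_n^{⊕(r+1)} is invariant under this action if and only if there is a polynomial g in (r+1)·n variables such that f(A_1,…,A_{r+1}) = g(((A_α)_{ii})_{1≤α≤r+1, 1≤i≤n})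 for all tuples of upper triangular matrices; that is, ℂ[𝔟^{⊕(r+1)}]^{𝕌_β} ≅ ℂ[𝔱^{⊕(r+1)}]. -/
/-!
The unipotent action does not change diagonal entries, so polynomials in the diagonal entries are
invariant. Conversely, call a tuple `A` of upper triangular matrices generic if all diagonal entries
are nonzero and the holonomy `i ↦ ∏ α, (A α i i) ^ (±1)` (sign given by the orientation of `α`) is
injective. Starting with a unitriangular `w` at vertex `0` and walking once around the cycle, each
arrow determines the gauge at its next vertex so that the arrow becomes diagonal. The walk closes
up iff `w` conjugates the upper triangular monodromy, whose diagonal is the inverse holonomy, to its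
diagonal; distinct eigenvalues make this possible (Lagrange interpolation). Hence an invariant `f`
satisfies `f A = f (diag A)` off the zero set of a nonzero polynomial, and therefore everywhere.
-/

namespace Matrix

open Polynomial

variable {m R K : Type*} [Fintype m] [LinearOrder m]

theorem IsUpperTriangular.mul_apply_self [Semiring R] {M N : Matrix m m R}
    (hM : M.IsUpperTriangular) (hN : N.IsUpperTriangular) (i : m) :
    (M * N) i i = M i i * N i i := by
  rw [mul_apply, Finset.sum_eq_single i]
  · intro k _ hk
    rcases hk.lt_or_gt with h | h
    · rw [hM h, zero_mul]
    · rw [hN h, mul_zero]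
  · simp

variable (m R) in
def upperTriangularDiagHom [CommSemiring R] :
    blockTriangularSubalgebra R R (id : m → m) →ₐ[R] (m → R) where
  toFun M i := (M : Matrix m m R) i i
  map_one' := funext fun i => one_apply_eq i
  map_mul' M N := funext (IsUpperTriangular.mul_apply_self M.2 N.2)
  map_zero' := rfl
  map_add' _ _ := rfl
  commutes' r := funext fun i => by simp [Algebra.algebraMap_eq_smul_one]

theorem IsUpperTriangular.aeval [CommSemiring R] {M : Matrix m m R} (hM : M.IsUpperTriangular)
    (p : R[X]) : (Polynomial.aeval M p).IsUpperTriangular := by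
  simpa [aeval_subalgebra_coe] using
    (Polynomial.aeval (⟨M, hM⟩ : blockTriangularSubalgebra R R (id : m → m)) p).2

theorem IsUpperTriangular.aeval_apply_self [CommSemiring R] {M : Matrix m m R}
    (hM : M.IsUpperTriangular) (p : R[X]) (i : m) :
    Polynomial.aeval M p i i = p.eval (M i i) := by
  let M' : blockTriangularSubalgebra R R (id : m → m) := ⟨M, hM⟩
  calc Polynomial.aeval M p i i = upperTriangularDiagHom m R (Polynomial.aeval M' p) i := by
        show _ = (Polynomial.aeval M' p : Matrix m m R) i i
        rw [aeval_subalgebra_coe]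
    _ = Polynomial.aeval (upperTriangularDiagHom m R M') p i := by rw [aeval_algHom_apply]
    _ = p.eval (M i i) := by rw [aeval_pi_apply₂]; rfl

theorem IsUpperTriangular.inv [Field K] {M : Matrix m m K} (hM : M.IsUpperTriangular) :
    M⁻¹.IsUpperTriangular := by
  by_cases h : IsUnit M.det
  · have := invertibleOfIsUnitDet M h
    exact blockTriangular_inv_of_blockTriangular hM
  · rw [nonsing_inv_apply_not_isUnit M h]
    exact blockTriangular_zero

theorem IsUpperTriangular.isUnit_det [Field K] {M : Matrix m m K} (hM : M.IsUpperTriangular)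
    (h0 : ∀ i, M i i ≠ 0) : IsUnit M.det := by
  rw [det_of_isUpperTriangular hM]
  exact (Finset.prod_ne_zero_iff.2 fun i _ => h0 i).isUnit

theorem IsUpperTriangular.inv_apply_self [Field K] {M : Matrix m m K}
    (hM : M.IsUpperTriangular) (h0 : ∀ i, M i i ≠ 0) (i : m) : M⁻¹ i i = (M i i)⁻¹ := by
  have h := hM.inv.mul_apply_self hM i
  rw [nonsing_inv_mul M (hM.isUnit_det h0), one_apply_eq] at h
  exact eq_inv_of_mul_eq_one_left h.symm

theorem IsUpperTriangular.mul_mul_inv_unitriangular [Field K] {u M v : Matrix m m K}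
    (hu : u.IsUpperTriangular) (hu1 : ∀ i, u i i = 1) (hM : M.IsUpperTriangular)
    (hv : v.IsUpperTriangular) (hv1 : ∀ i, v i i = 1) :
    (u * M * v⁻¹).IsUpperTriangular ∧ ∀ i, (u * M * v⁻¹) i i = M i i := by
  have huM : (u * M).IsUpperTriangular := hu.mul hM
  refine ⟨huM.mul hv.inv, fun i => ?_⟩
  rw [huM.mul_apply_self hv.inv, hu.mul_apply_self hM,
    hv.inv_apply_self (fun i => by simp [hv1]), hu1, hv1]
  simp

theorem IsUpperTriangular.exists_unitriangular_mul_eq_diagonal_mul [Field K]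
    {M : Matrix m m K} (hM : M.IsUpperTriangular) (hinj : Function.Injective fun i => M i i) :
    ∃ w : Matrix m m K, w.IsUpperTriangular ∧ (∀ i, w i i = 1) ∧
      w * M = diagonal (fun i => M i i) * w := by
  classical
  -- `E i` is the spectral projection of `M` for the eigenvalue `M i i`; row `i` of `E i` is
  -- a left eigenvector with leading entry `1`.
  let q : m → K[X] := fun i => ∏ j ∈ Finset.univ.erase i, (X - C (M j j))
  have hq : ∀ i, (q i).eval (M i i) ≠ 0 := fun i => by
    simp only [q, eval_prod, eval_sub, eval_X, eval_C]
    exact Finset.prod_ne_zero_iff.2 fun j hj =>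
      sub_ne_zero.2 fun h => Finset.ne_of_mem_erase hj (hinj h).symm
  let E : m → Matrix m m K := fun i => ((q i).eval (M i i))⁻¹ • Polynomial.aeval M (q i)
  have hE : ∀ i, E i * M = M i i • E i := fun i => by
    have h := aeval_self_charpoly M
    rw [charpoly_of_isUpperTriangular M hM, ← Finset.prod_erase_mul _ _ (Finset.mem_univ i),
      map_mul, map_sub, aeval_X, aeval_C, mul_sub, sub_eq_zero] at h
    simp only [E, smul_mul_assoc]
    rw [h, Algebra.algebraMap_eq_smul_one, mul_smul_comm, mul_one, smul_comm]
  refine ⟨of fun i j => E i i j, fun i j hij => ?_, fun i => ?_, ?_⟩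
  · simp [E, (hM.aeval (q i)) hij]
  · simp [E, hM.aeval_apply_self, hq i]
  · ext i j
    rw [diagonal_mul, mul_apply]
    simpa [mul_apply] using congrFun (congrFun (hE i) i) j

end Matrix

namespace MvPolynomial

theorem eval_bind₁ {R σ τ : Type*} [CommSemiring R] (y : τ → R) (φ : σ → MvPolynomial τ R)
    (P : MvPolynomial σ R) : eval y (bind₁ φ P) = eval (fun s => eval y (φ s)) P :=
  eval₂Hom_bind₁ _ _ _ _

theorem eq_of_eval_eq_of_eval_ne_zero {R σ : Type*} [CommRing R] [IsDomain R] [Infinite R]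
    {p q Δ : MvPolynomial σ R} (hΔ : Δ ≠ 0) (hpq : ∀ x, eval x Δ ≠ 0 → eval x p = eval x q) :
    p = q := by
  have : (p - q) * Δ = 0 := funext fun x => by
    by_cases hx : eval x Δ = 0 <;> simp [hx, hpq]
  exact sub_eq_zero.1 ((mul_eq_zero.1 this).resolve_right hΔ)

end MvPolynomial

open Matrix MvPolynomial

section Density

variable {ι m K : Type*} [LinearOrder m] [Field K]

noncomputable def diagRestrict (P : MvPolynomial (ι × m × m) K) : MvPolynomial (ι × m) K :=
  bind₁ (fun q => if q.2.1 = q.2.2 then X (q.1, q.2.1) else 0) P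

theorem eval_diagRestrict (P : MvPolynomial (ι × m × m) K) (d : ι × m → K) :
    eval d (diagRestrict P) = eval (fun q => diagonal (fun i => d (q.1, i)) q.2.1 q.2.2) P := by
  rw [diagRestrict, eval_bind₁]
  refine congrArg (eval · P) (funext fun q => ?_)
  split_ifs with h <;> simp [h]

theorem eq_apply_diagonal_of_generic [Fintype m] [Infinite K] {f : (ι → Matrix m m K) → K}
    {P : MvPolynomial (ι × m × m) K} (hP : ∀ A, f A = eval (fun q => A q.1 q.2.1 q.2.2) P)
    {Δ : MvPolynomial (ι × m) K} (hΔ : Δ ≠ 0)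
    (hgen : ∀ A : ι → Matrix m m K, (∀ α, (A α).IsUpperTriangular) →
      eval (fun p => A p.1 p.2 p.2) Δ ≠ 0 → f A = f fun α => diagonal fun i => A α i i)
    {A : ι → Matrix m m K} (hA : ∀ α, (A α).IsUpperTriangular) :
    f A = f fun α => diagonal fun i => A α i i := by
  let upper (x : ι × m × m → K) (α : ι) : Matrix m m K :=
    of fun i j => if i ≤ j then x (α, i, j) else 0
  let e : ι × m → ι × m × m := fun p => (p.1, p.2, p.2)
  have hupper (x) :
      eval x (bind₁ (fun q => if q.2.1 ≤ q.2.2 then X q else 0) P) = f (upper x) := by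
    rw [eval_bind₁, hP]
    refine congrArg (eval · P) (funext fun q => ?_)
    split_ifs with hq <;> simp [upper, hq]
  have hdiag (x) :
      eval x (rename e (diagRestrict P)) = f fun α => diagonal fun i => x (α, i, i) := by
    rw [eval_rename, eval_diagRestrict, hP]
    rfl
  have he : Function.Injective e := fun _ _ hpq => by simp_all [e, Prod.ext_iff]
  have key : bind₁ (fun q => if q.2.1 ≤ q.2.2 then X q else 0) P = rename e (diagRestrict P) :=
    eq_of_eval_eq_of_eval_ne_zero (Δ := rename e Δ)
      (fun h0 => hΔ (rename_injective e he (by rw [h0, map_zero]))) fun x hx => by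
      have hdiag_upper : (fun p => upper x p.1 p.2 p.2) = x ∘ e := funext fun p => if_pos le_rfl
      rw [hupper, hdiag, hgen (upper x) (fun α i j hij => if_neg (not_le.2 hij))
        (by rwa [hdiag_upper, ← eval_rename])]
      simp [upper]
  have hA' : upper (fun q => A q.1 q.2.1 q.2.2) = A := by
    funext α
    ext i j
    by_cases hij : i ≤ j
    · simp [upper, hij]
    · simp [upper, hij, hA α (not_le.1 hij)]
  calc f A = f (upper fun q => A q.1 q.2.1 q.2.2) := by rw [hA']
    _ = f fun α => diagonal fun i => A α i i :=
      (hupper fun q => A q.1 q.2.1 q.2.2).symm.trans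
        ((congrArg (eval _) key).trans (hdiag fun q => A q.1 q.2.1 q.2.2))

end Density

section Cycle

open Fin.NatCast

variable {m K : Type*} [Field K] {r : ℕ}

noncomputable def orientedDiag (tl : Fin (r + 1) → Fin (r + 1)) (A : Fin (r + 1) → Matrix m m K)
    (α : Fin (r + 1)) (i : m) : K :=
  if tl α = α then A α i i else (A α i i)⁻¹

noncomputable def holonomy (tl : Fin (r + 1) → Fin (r + 1)) (A : Fin (r + 1) → Matrix m m K)
    (i : m) : K :=
  ∏ α, orientedDiag tl A α i

noncomputable def gaugeStep [Fintype m] [DecidableEq m] (tl : Fin (r + 1) → Fin (r + 1)) (A : Fin (r + 1) → Matrix m m K)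
    (α : Fin (r + 1)) : Matrix m m K :=
  if tl α = α then (A α)⁻¹ else A α

/-- The gauge at vertex `k` obtained from `w` at vertex `0` by making the arrows `0, …, k - 1`
diagonal one after the other (see `pathGauge_succ`). -/
noncomputable def pathGauge [Fintype m] [DecidableEq m] (tl : Fin (r + 1) → Fin (r + 1))
    (A : Fin (r + 1) → Matrix m m K) (w : Matrix m m K) (k : ℕ) : Matrix m m K :=
  diagonal (fun i => ∏ j ∈ Finset.range k, orientedDiag tl A j i) * w *
    ((List.range k).map fun j : ℕ => gaugeStep tl A j).prod

variable [Fintype m] [LinearOrder m] {tl : Fin (r + 1) → Fin (r + 1)}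
  {A : Fin (r + 1) → Matrix m m K}

theorem pathGauge_zero (w : Matrix m m K) : pathGauge tl A w 0 = w := by
  simp [pathGauge]

theorem pathGauge_succ (w : Matrix m m K) (k : ℕ) :
    pathGauge tl A w (k + 1) =
      diagonal (orientedDiag tl A k) * pathGauge tl A w k * gaugeStep tl A k := by
  simp only [pathGauge, Finset.prod_range_succ, List.prod_range_succ, ← mul_assoc,
    diagonal_mul_diagonal, mul_comm]

theorem gaugeStep_isUpperTriangular (hA : ∀ α, (A α).IsUpperTriangular) (α : Fin (r + 1)) :
    (gaugeStep tl A α).IsUpperTriangular := by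
  unfold gaugeStep
  split_ifs
  exacts [(hA α).inv, hA α]

theorem orientedDiag_mul_gaugeStep_apply_self (hA : ∀ α, (A α).IsUpperTriangular)
    (hA0 : ∀ α i, A α i i ≠ 0) (α : Fin (r + 1)) (i : m) :
    orientedDiag tl A α i * gaugeStep tl A α i i = 1 := by
  unfold orientedDiag gaugeStep
  split_ifs
  · rw [(hA α).inv_apply_self (hA0 α), mul_inv_cancel₀ (hA0 α i)]
  · exact inv_mul_cancel₀ (hA0 α i)

theorem pathGauge_unitriangular (hA : ∀ α, (A α).IsUpperTriangular) (hA0 : ∀ α i, A α i i ≠ 0)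
    {w : Matrix m m K} (hw : w.IsUpperTriangular) (hw1 : ∀ i, w i i = 1) (k : ℕ) :
    (pathGauge tl A w k).IsUpperTriangular ∧ ∀ i, pathGauge tl A w k i i = 1 := by
  induction k with
  | zero => simpa [pathGauge_zero] using ⟨hw, hw1⟩
  | succ k ih =>
    have hL : (diagonal (orientedDiag tl A k)).IsUpperTriangular := blockTriangular_diagonal _
    have hLu : (diagonal (orientedDiag tl A k) * pathGauge tl A w k).IsUpperTriangular :=
      hL.mul ih.1
    rw [pathGauge_succ]
    refine ⟨hLu.mul (gaugeStep_isUpperTriangular hA _), fun i => ?_⟩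
    rw [hLu.mul_apply_self (gaugeStep_isUpperTriangular hA _), hL.mul_apply_self ih.1, ih.2,
      diagonal_apply_eq, mul_one, orientedDiag_mul_gaugeStep_apply_self hA hA0]

theorem pathGauge_succ_mul_of_eq (hA : ∀ α, (A α).IsUpperTriangular) (hA0 : ∀ α i, A α i i ≠ 0)
    (w : Matrix m m K) {α : Fin (r + 1)} (h : tl α = α) :
    pathGauge tl A w ((α : ℕ) + 1) * A α = diagonal (fun i => A α i i) * pathGauge tl A w α := by
  rw [pathGauge_succ, Fin.cast_val_eq_self, gaugeStep, if_pos h, mul_assoc,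
    nonsing_inv_mul _ ((hA α).isUnit_det (hA0 α)), mul_one]
  congr 2
  funext i
  exact if_pos h

theorem pathGauge_mul_of_ne (hA0 : ∀ α i, A α i i ≠ 0) (w : Matrix m m K) {α : Fin (r + 1)}
    (h : tl α ≠ α) :
    pathGauge tl A w α * A α = diagonal (fun i => A α i i) * pathGauge tl A w ((α : ℕ) + 1) := by
  rw [pathGauge_succ, Fin.cast_val_eq_self, gaugeStep, if_neg h, ← mul_assoc, ← mul_assoc,
    diagonal_mul_diagonal]
  have h1 : (fun i => A α i i * orientedDiag tl A α i) = fun _ => 1 :=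
    funext fun i => by simp [orientedDiag, h, mul_inv_cancel₀ (hA0 α i)]
  rw [h1, diagonal_one, one_mul]

theorem prod_gaugeStep_isUpperTriangular_and_apply_self (hA : ∀ α, (A α).IsUpperTriangular)
    (hA0 : ∀ α i, A α i i ≠ 0) (k : ℕ) :
    ((List.range k).map fun j : ℕ => gaugeStep tl A j).prod.IsUpperTriangular ∧
      ∀ i, ((List.range k).map fun j : ℕ => gaugeStep tl A j).prod i i =
        (∏ j ∈ Finset.range k, orientedDiag tl A j i)⁻¹ := by
  induction k with
  | zero => exact ⟨blockTriangular_one, fun i => by simp⟩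
  | succ k ih =>
    rw [List.prod_range_succ]
    refine ⟨ih.1.mul (gaugeStep_isUpperTriangular hA _), fun i => ?_⟩
    rw [ih.1.mul_apply_self (gaugeStep_isUpperTriangular hA _), ih.2,
      eq_inv_of_mul_eq_one_right (orientedDiag_mul_gaugeStep_apply_self hA hA0 _ i),
      Finset.prod_range_succ, mul_inv]

theorem exists_unitriangular_pathGauge_eq_self (hA : ∀ α, (A α).IsUpperTriangular)
    (hA0 : ∀ α i, A α i i ≠ 0) (hinj : Function.Injective (holonomy tl A)) :
    ∃ w : Matrix m m K, w.IsUpperTriangular ∧ (∀ i, w i i = 1) ∧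
      pathGauge tl A w (r + 1) = w := by
  have hhol (i : m) : ∏ j ∈ Finset.range (r + 1), orientedDiag tl A j i = holonomy tl A i := by
    rw [holonomy, ← Fin.prod_univ_eq_prod_range]
    simp only [Fin.cast_val_eq_self]
  obtain ⟨hN, hNdiag⟩ := prod_gaugeStep_isUpperTriangular_and_apply_self (tl := tl) hA hA0 (r + 1)
  obtain ⟨w, hw, hw1, hwN⟩ := hN.exists_unitriangular_mul_eq_diagonal_mul
    fun i j hij => hinj (by simpa [hNdiag, hhol] using hij)
  refine ⟨w, hw, hw1, ?_⟩
  have hne (i : m) : ∏ j ∈ Finset.range (r + 1), orientedDiag tl A j i ≠ 0 :=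
    Finset.prod_ne_zero_iff.2 fun j _ =>
      left_ne_zero_of_mul_eq_one (orientedDiag_mul_gaugeStep_apply_self hA hA0 _ i)
  rw [pathGauge, mul_assoc, hwN, ← mul_assoc, diagonal_mul_diagonal]
  simp only [hNdiag, mul_inv_cancel₀ (hne _), diagonal_one, one_mul]

theorem exists_unitriangular_gauge {hd : Fin (r + 1) → Fin (r + 1)}
    (horient : ∀ α, (tl α = α ∧ hd α = α + 1) ∨ (tl α = α + 1 ∧ hd α = α))
    (hA : ∀ α, (A α).IsUpperTriangular) (hA0 : ∀ α i, A α i i ≠ 0)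
    (hinj : Function.Injective (holonomy tl A)) :
    ∃ u : Fin (r + 1) → Matrix m m K, (∀ v, (u v).IsUpperTriangular ∧ ∀ i, u v i i = 1) ∧
      ∀ α, u (hd α) * A α * (u (tl α))⁻¹ = diagonal (fun i => A α i i) := by
  obtain ⟨w, hw, hw1, hclosed⟩ := exists_unitriangular_pathGauge_eq_self hA hA0 hinj
  have hu (v : ℕ) := pathGauge_unitriangular (tl := tl) hA hA0 hw hw1 v
  have hsucc (α : Fin (r + 1)) :
      pathGauge tl A w ((α + 1 : Fin (r + 1)) : ℕ) = pathGauge tl A w ((α : ℕ) + 1) := by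
    rw [Fin.val_add_one]
    split_ifs with h
    · rw [h, Fin.val_last, pathGauge_zero, hclosed]
    · rfl
  refine ⟨fun v => pathGauge tl A w v, fun v => hu v, fun α => ?_⟩
  suffices pathGauge tl A w (hd α) * A α = diagonal (fun i => A α i i) * pathGauge tl A w (tl α) by
    rw [this, mul_assoc, mul_nonsing_inv _ ((hu _).1.isUnit_det fun i => by simp [(hu _).2]),
      mul_one]
  by_cases h : tl α = α
  · have hhd : hd α = α + 1 := (horient α).elim (·.2) fun h' => h'.2.trans (h.symm.trans h'.1)
    simp only [h, hhd, hsucc]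
    exact pathGauge_succ_mul_of_eq hA hA0 w h
  · obtain ⟨htl, hhd⟩ := (horient α).resolve_left fun h' => h h'.1
    simp only [htl, hhd, hsucc]
    exact pathGauge_mul_of_ne hA0 w h

end Cycle

section Genericity

variable {m K : Type*} [Field K] {r : ℕ}

/-- `holonomy tl A i / holonomy tl A j = holonomyCross tl i j / holonomyCross tl j i`, evaluated
at the diagonal entries of `A`. -/
noncomputable def holonomyCross (tl : Fin (r + 1) → Fin (r + 1)) (i j : m) :
    MvPolynomial (Fin (r + 1) × m) K :=
  ∏ α, X (α, if tl α = α then i else j)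

noncomputable def holonomyDiscriminant [Fintype m] [DecidableEq m]
    (tl : Fin (r + 1) → Fin (r + 1)) : MvPolynomial (Fin (r + 1) × m) K :=
  (∏ p, X p) * ∏ p ∈ Finset.univ.offDiag, (holonomyCross tl p.1 p.2 - holonomyCross tl p.2 p.1)

theorem holonomyCross_ne (tl : Fin (r + 1) → Fin (r + 1)) {i j : m} (hij : i ≠ j) :
    (holonomyCross tl i j : MvPolynomial (Fin (r + 1) × m) K) ≠ holonomyCross tl j i := by
  classical
  intro h
  have := congrArg (eval fun p => if p = (0, i) then 0 else 1) h
  simp only [holonomyCross, map_prod, eval_X] at this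
  rw [Fintype.prod_eq_single 0 fun α hα => by simp [hα],
    Fintype.prod_eq_single 0 fun α hα => by simp [hα]] at this
  by_cases h0 : tl 0 = 0 <;> simp [h0, hij.symm] at this

theorem holonomyDiscriminant_ne_zero [Fintype m] [DecidableEq m]
    (tl : Fin (r + 1) → Fin (r + 1)) :
    (holonomyDiscriminant tl : MvPolynomial (Fin (r + 1) × m) K) ≠ 0 :=
  mul_ne_zero (Finset.prod_ne_zero_iff.2 fun _ _ => X_ne_zero _)
    (Finset.prod_ne_zero_iff.2 fun _ hp =>
      sub_ne_zero.2 (holonomyCross_ne tl (Finset.mem_offDiag.1 hp).2.2))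

theorem generic_of_eval_holonomyDiscriminant_ne_zero [Fintype m] [DecidableEq m]
    {tl : Fin (r + 1) → Fin (r + 1)} {A : Fin (r + 1) → Matrix m m K}
    (h : eval (fun p => A p.1 p.2 p.2) (holonomyDiscriminant tl) ≠ 0) :
    (∀ α i, A α i i ≠ 0) ∧ Function.Injective (holonomy tl A) := by
  simp only [holonomyDiscriminant, map_mul, map_prod, eval_X, mul_ne_zero_iff,
    Finset.prod_ne_zero_iff, Finset.mem_univ, true_implies, Finset.mem_offDiag, map_sub,
    sub_ne_zero] at h
  obtain ⟨h0, hcross⟩ := h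
  refine ⟨fun α i => h0 (α, i), fun i j hij => ?_⟩
  by_contra hne
  apply hcross (i, j) ⟨trivial, trivial, hne⟩
  have hprod : holonomy tl A i * eval (fun p => A p.1 p.2 p.2) (holonomyCross tl j i) =
      holonomy tl A j * eval (fun p => A p.1 p.2 p.2) (holonomyCross tl i j) := by
    simp only [holonomy, holonomyCross, map_prod, eval_X, ← Finset.prod_mul_distrib]
    refine Finset.prod_congr rfl fun α _ => ?_
    unfold orientedDiag
    split_ifs
    · exact mul_comm _ _
    · rw [inv_mul_cancel₀ (h0 (α, i)), inv_mul_cancel₀ (h0 (α, j))]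
  have hne0 : holonomy tl A j ≠ 0 := Finset.prod_ne_zero_iff.2 fun α _ => by
    unfold orientedDiag
    split_ifs <;> simp [h0 (α, j)]
  rw [show holonomy tl A i = holonomy tl A j from hij] at hprod
  exact (mul_left_cancel₀ hne0 hprod).symm

end Genericity

theorem affineCycle_orientation {r : ℕ} {tl hd : Fin (r + 1) → Fin (r + 1)}
    (hor : ∀ α : Fin (r + 1),
      ((α : ℕ) < r →
        (((tl α : ℕ) = (α : ℕ) ∧ (hd α : ℕ) = (α : ℕ) + 1) ∨
         ((tl α : ℕ) = (α : ℕ) + 1 ∧ (hd α : ℕ) = (α : ℕ)))) ∧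
      ((α : ℕ) = r →
        (((tl α : ℕ) = r ∧ (hd α : ℕ) = 0) ∨
         ((tl α : ℕ) = 0 ∧ (hd α : ℕ) = r))))
    (α : Fin (r + 1)) : (tl α = α ∧ hd α = α + 1) ∨ (tl α = α + 1 ∧ hd α = α) := by
  have := hor α
  have := α.isLt
  simp only [Fin.ext_iff, Fin.val_add_one, Fin.val_last]
  split_ifs <;> omega

theorem semiInvariants_filtered_affine_Ar_Dynkin_quiver_general
    (n r : ℕ)
    (tl hd : Fin (r + 1) → Fin (r + 1))
    (hor : ∀ α : Fin (r + 1),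
      ((α : ℕ) < r →
        (((tl α : ℕ) = (α : ℕ) ∧ (hd α : ℕ) = (α : ℕ) + 1) ∨
         ((tl α : ℕ) = (α : ℕ) + 1 ∧ (hd α : ℕ) = (α : ℕ)))) ∧
      ((α : ℕ) = r →
        (((tl α : ℕ) = r ∧ (hd α : ℕ) = 0) ∨
         ((tl α : ℕ) = 0 ∧ (hd α : ℕ) = r))))
    (f : (Fin (r + 1) → Matrix (Fin n) (Fin n) ℂ) → ℂ)
    (hf : ∃ P : MvPolynomial (Fin (r + 1) × Fin n × Fin n) ℂ,
      ∀ A, f A = MvPolynomial.eval (fun q => A q.1 q.2.1 q.2.2) P) :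
    (∀ u : Fin (r + 1) → Matrix (Fin n) (Fin n) ℂ, (∀ v, IsUnipUT (u v)) →
        ∀ A : Fin (r + 1) → Matrix (Fin n) (Fin n) ℂ, (∀ α, IsUT (A α)) →
          f (fun α => u (hd α) * A α * (u (tl α))⁻¹) = f A) ↔
      ∃ g : MvPolynomial (Fin (r + 1) × Fin n) ℂ,
        ∀ A : Fin (r + 1) → Matrix (Fin n) (Fin n) ℂ, (∀ α, IsUT (A α)) →
          f A = MvPolynomial.eval (fun q => A q.1 q.2 q.2) g := by
  obtain ⟨P, hP⟩ := hf
  constructor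
  · intro hinv
    have hgeneric (A : Fin (r + 1) → Matrix (Fin n) (Fin n) ℂ) (hA : ∀ α, IsUT (A α))
        (hgen : eval (fun p => A p.1 p.2 p.2) (holonomyDiscriminant tl) ≠ 0) :
        f A = f fun α => diagonal fun i => A α i i := by
      obtain ⟨hA0, hinj⟩ := generic_of_eval_holonomyDiscriminant_ne_zero hgen
      obtain ⟨u, hu, hgauge⟩ :=
        exists_unitriangular_gauge (affineCycle_orientation hor) hA hA0 hinj
      rw [← hinv u hu A hA]
      exact congrArg f (funext hgauge)
    refine ⟨diagRestrict P, fun A hA => ?_⟩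
    rw [eval_diagRestrict]
    exact (eq_apply_diagonal_of_generic hP (holonomyDiscriminant_ne_zero tl) hgeneric hA).trans
      (hP _)
  · rintro ⟨g, hg⟩ u hu A hA
    have hB (α : Fin (r + 1)) := IsUpperTriangular.mul_mul_inv_unitriangular (hu (hd α)).1
      (hu _).2 (hA α) (hu (tl α)).1 (hu _).2
    rw [hg _ fun α => (hB α).1, hg A hA]
    simp only [(hB _).2]

/-- Semi-invariants of filtered affine `Ã_r`-Dynkin quivers (no framing):
for any orientation of the affine `Ã_r`-Dynkin graph (vertices `Fin (r+1)` arranged in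
a cycle, arrows `Fin (r+1)`; for `α < r` the `α`-th arrow joins `α` and `α+1`, and the
last arrow (index `r`) joins `r` and `0`), a polynomial function on `𝔟ₙ^{⊕(r+1)}` is
invariant under the change-of-basis action of `Uₙ^{r+1}` iff it is a polynomial in the
diagonal entries; i.e. `ℂ[𝔟^{⊕(r+1)}]^{𝕌_β} ≅ ℂ[𝔱^{⊕(r+1)}]`. -/
theorem semiInvariants_filtered_affine_Ar_Dynkin_quiver
    (n r : ℕ) (hn : 1 ≤ n) (hr : 1 ≤ r)
    (tl hd : Fin (r + 1) → Fin (r + 1))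
    (hor : ∀ α : Fin (r + 1),
      ((α : ℕ) < r →
        (((tl α : ℕ) = (α : ℕ) ∧ (hd α : ℕ) = (α : ℕ) + 1) ∨
         ((tl α : ℕ) = (α : ℕ) + 1 ∧ (hd α : ℕ) = (α : ℕ)))) ∧
      ((α : ℕ) = r →
        (((tl α : ℕ) = r ∧ (hd α : ℕ) = 0) ∨
         ((tl α : ℕ) = 0 ∧ (hd α : ℕ) = r))))
    (f : (Fin (r + 1) → Matrix (Fin n) (Fin n) ℂ) → ℂ)
    (hf : ∃ P : MvPolynomial (Fin (r + 1) × Fin n × Fin n) ℂ,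
      ∀ A, f A = MvPolynomial.eval (fun q => A q.1 q.2.1 q.2.2) P) :
    (∀ u : Fin (r + 1) → Matrix (Fin n) (Fin n) ℂ, (∀ v, IsUnipUT (u v)) →
        ∀ A : Fin (r + 1) → Matrix (Fin n) (Fin n) ℂ, (∀ α, IsUT (A α)) →
          f (fun α => u (hd α) * A α * (u (tl α))⁻¹) = f A) ↔
      ∃ g : MvPolynomial (Fin (r + 1) × Fin n) ℂ,
        ∀ A : Fin (r + 1) → Matrix (Fin n) (Fin n) ℂ, (∀ α, IsUT (A α)) →
          f A = MvPolynomial.eval (fun q => A q.1 q.2 q.2) g :=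
  semiInvariants_filtered_affine_Ar_Dynkin_quiver_general n r tl hd hor f hf
end
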